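/- If Q ∈ ℝ^{n1×n1×n3} is an orthogonal tensor under the t-product (Qᵀ ∗ Q = Q ∗ Qᵀ = I), then the t-product with Q preserves the Frobenius norm: ‖Q ∗ A‖_F = ‖A‖_F for every A ∈ ℝ^{n1×n2×n3}. -/
import Mathlib


open Matrix

/-- A third-order real tensor represented by its frontal slices. -/
abbrev Tensor (n1 n2 n3 : ℕ) := Fin n3 → Matrix (Fin n1) (Fin n2) ℝ

/-- Block-circulant matrix of a third-order tensor. -/
def bcirc {n1 n2 n3 : ℕ} (A : Tensor n1 n2 n3) :
    Matrix (Fin n3 × Fin n1) (Fin n3 × Fin n2) ℝ :=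
  fun p q => A (p.1 - q.1) p.2 q.2

/-- Unfold: stack the frontal slices vertically. -/
def unfold {n2 l n3 : ℕ} (B : Tensor n2 l n3) :
    Matrix (Fin n3 × Fin n2) (Fin l) ℝ :=
  fun p j => B p.1 p.2 j

/-- Fold: inverse of unfold. -/
def fold {n1 l n3 : ℕ} (M : Matrix (Fin n3 × Fin n1) (Fin l) ℝ) :
    Tensor n1 l n3 :=
  fun k i j => M (k, i) j

/-- The t-product A ∗ B = fold(bcirc(A) · unfold(B)). -/
def tProd {n1 n2 l n3 : ℕ} (A : Tensor n1 n2 n3) (B : Tensor n2 l n3) :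
    Tensor n1 l n3 :=
  fold (bcirc A * unfold B)

/-- Tensor transpose: transpose each frontal slice and reverse the order of
slices 2 through n3. -/
def ttranspose {n1 n2 n3 : ℕ} (A : Tensor n1 n2 n3) : Tensor n2 n1 n3 :=
  fun k => (A (-k))ᵀ

/-- The identity tensor. -/
def idTensor (n n3 : ℕ) [NeZero n3] : Tensor n n n3 :=
  fun k => if k = 0 then (1 : Matrix (Fin n) (Fin n) ℝ) else 0

/-- Frobenius norm of a third-order tensor. -/
noncomputable def fnorm {n1 n2 n3 : ℕ} (A : Tensor n1 n2 n3) : ℝ :=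
  Real.sqrt (∑ k, ∑ i, ∑ j, (A k i j) ^ 2)

lemma bcirc_tProd {n1 n2 l n3 : ℕ} [NeZero n3] (A : Tensor n1 n2 n3)
    (B : Tensor n2 l n3) : bcirc (tProd A B) = bcirc A * bcirc B := by
  funext p q
  simp only [bcirc, tProd, fold, Matrix.mul_apply, unfold]
  refine Fintype.sum_equiv ((Equiv.addRight q.1).prodCongr (Equiv.refl (Fin n2))) _ _ ?_
  intro r
  simp only [Equiv.prodCongr_apply, Equiv.coe_addRight, Equiv.refl_apply, Prod.map]
  rw [sub_right_comm, sub_sub, add_sub_cancel_right]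

lemma bcirc_ttranspose {n1 n2 n3 : ℕ} [NeZero n3] (A : Tensor n1 n2 n3) :
    bcirc (ttranspose A) = (bcirc A)ᵀ := by
  funext p q
  simp only [bcirc, ttranspose, Matrix.transpose_apply]
  rw [neg_sub]

lemma bcirc_idTensor {n n3 : ℕ} [NeZero n3] : bcirc (idTensor n n3) = 1 := by
  funext p q
  simp only [bcirc, idTensor]
  rcases p with ⟨p1, p2⟩; rcases q with ⟨q1, q2⟩
  by_cases h : p1 = q1
  · simp [h, Matrix.one_apply, Prod.ext_iff]
  · simp [sub_eq_zero, h, Matrix.one_apply, Prod.ext_iff]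

theorem tprod_orthogonal_isometry {n1 n2 n3 : ℕ} [NeZero n3]
    (Q : Tensor n1 n1 n3)
    (hQ1 : tProd (ttranspose Q) Q = idTensor n1 n3)
    (hQ2 : tProd Q (ttranspose Q) = idTensor n1 n3)
    (A : Tensor n1 n2 n3) :
    fnorm (tProd Q A) = fnorm A := by
  have hQ : (bcirc Q)ᵀ * bcirc Q = 1 := by
    rw [← bcirc_ttranspose, ← bcirc_tProd, hQ1, bcirc_idTensor]
  have key : ∀ {m : ℕ} (M : Matrix (Fin n3 × Fin n1) (Fin m) ℝ) (N : Tensor n1 m n3),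
      (∀ k i j, N k i j = M (k, i) j) →
      ∑ k, ∑ i, ∑ j, (N k i j) ^ 2 = Matrix.trace (Mᵀ * M) := by
    intro m M N h
    have : Matrix.trace (Mᵀ * M) = ∑ p : Fin n3 × Fin n1, ∑ j, (M p j) ^ 2 := by
      simp only [Matrix.trace, Matrix.diag, Matrix.mul_apply, Matrix.transpose_apply, ← sq]
      exact Finset.sum_comm ..
    rw [this, Fintype.sum_prod_type]
    simp only [h]
  have h1 := key (bcirc Q * unfold A) (tProd Q A) (fun k i j => rfl)
  have h2 := key (unfold A) A (fun k i j => rfl)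
  have : (bcirc Q * unfold A)ᵀ * (bcirc Q * unfold A) = (unfold A)ᵀ * unfold A := by
    rw [Matrix.transpose_mul, Matrix.mul_assoc, ← Matrix.mul_assoc (bcirc Q)ᵀ, hQ,
      Matrix.one_mul]
  unfold fnorm
  rw [h1, h2, this]
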